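/- arXiv:1908.08606 — 2 statements merged into one kernel-verified Lean document; each statement's English description precedes it below -/
import Mathlib

section
/- Let $Y$ be a binomial random variable with parameters $\lceil n/8 \rceil$ and $(1-e^{-t})/2$, where $t \in [0,1]$. Then $\P(Y \ge \lfloor nt/8 \rfloor) \le 2 e^{1/2} \exp(-(2\log 2 - 1) n t /16)$. -/
open MeasureTheory

/-- Chernoff bound for a binomial random variable `Y` with parameters `⌈n/8⌉` and
`(1-e^{-t})/2`, `t ∈ [0,1]`: `P(Y ≥ ⌊nt/8⌋) ≤ 2 e^{1/2} exp(-(2 log 2 - 1) n t / 16)`. -/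
theorem binomial_chernoff {Ω : Type*} [MeasurableSpace Ω] (μ : Measure Ω)
    [IsProbabilityMeasure μ] (n : ℕ) (t : ℝ) (ht : t ∈ Set.Icc (0 : ℝ) 1)
    (N : ℕ) (hN : N = ⌈(n : ℝ) / 8⌉₊) (Y : Ω → ℕ)
    (hbin : ∀ k : ℕ, μ {ω | Y ω = k} =
      ENNReal.ofReal ((N.choose k : ℝ) * ((1 - Real.exp (-t)) / 2) ^ k *
        (1 - (1 - Real.exp (-t)) / 2) ^ (N - k))) :
    μ {ω | ⌊(n : ℝ) * t / 8⌋₊ ≤ Y ω} ≤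
      ENNReal.ofReal (2 * Real.exp (1 / 2) *
        Real.exp (-(2 * Real.log 2 - 1) * n * t / 16)) := by
  obtain ⟨ht0, ht1⟩ := ht
  set p : ℝ := (1 - Real.exp (-t)) / 2 with hp
  set m : ℕ := ⌊(n : ℝ) * t / 8⌋₊ with hm
  have hexp1 : Real.exp (-t) ≤ 1 := Real.exp_le_one_iff.mpr (by linarith)
  have hexp0 : 0 < Real.exp (-t) := Real.exp_pos _
  have hp0 : 0 ≤ p := by rw [hp]; linarith
  have hp2 : p ≤ 1 / 2 := by rw [hp]; linarith
  have hpt : 2 * p ≤ t := by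
    have := Real.add_one_le_exp (-t)
    rw [hp]; linarith
  have h1p : (0 : ℝ) ≤ 1 - p := by linarith
  set b : ℕ → ℝ := fun k => (N.choose k : ℝ) * p ^ k * (1 - p) ^ (N - k) with hb
  have hb0 : ∀ k, 0 ≤ b k := fun k => by
    have := Nat.cast_nonneg (α := ℝ) (N.choose k)
    positivity
  have hbz : ∀ k, N < k → b k = 0 := fun k hk => by
    simp [hb, Nat.choose_eq_zero_of_lt hk]
  set g : ℕ → ℝ := fun j =>
    (1 / 2 : ℝ) ^ m * ((N.choose j : ℝ) * (2 * p) ^ j * (1 - p) ^ (N - j)) with hg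
  have hg0 : ∀ j, 0 ≤ g j := fun j => by
    have := Nat.cast_nonneg (α := ℝ) (N.choose j)
    positivity
  have hgz : ∀ j, N < j → g j = 0 := fun j hj => by
    simp [hg, Nat.choose_eq_zero_of_lt hj]
  have hgsum : Summable g :=
    summable_of_ne_finset_zero (s := Finset.range (N + 1))
      (fun j hj => hgz j (by simp at hj; omega))
  have hbsum : Summable (fun k => b (m + k)) :=
    summable_of_ne_finset_zero (s := Finset.range (N + 1))
      (fun k hk => hbz _ (by simp at hk; omega))
  have hsum_g : ∑' j, g j = (1 / 2 : ℝ) ^ m * (1 + p) ^ N := by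
    rw [tsum_eq_sum (s := Finset.range (N + 1))
      (fun j hj => hgz j (by simp at hj; omega))]
    have hap : ((2 * p) + (1 - p)) ^ N
        = ∑ j ∈ Finset.range (N + 1), (2 * p) ^ j * (1 - p) ^ (N - j) * (N.choose j : ℝ) :=
      add_pow (2 * p) (1 - p) N
    have h1 : (1 + p : ℝ) = 2 * p + (1 - p) := by ring
    rw [h1, hap, Finset.mul_sum]
    apply Finset.sum_congr rfl
    intro j _
    rw [hg]; ring
  have hkey : ∑' k, b (m + k) ≤ (1 / 2 : ℝ) ^ m * (1 + p) ^ N := by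
    rw [← hsum_g]
    refine Summable.tsum_le_tsum_of_inj (fun k => m + k) (add_right_injective m)
      (fun c _ => hg0 c) (fun k => ?_) hbsum hgsum
    have hkey2 : p ^ (m + k) ≤ (1 / 2 : ℝ) ^ m * (2 * p) ^ (m + k) := by
      rw [mul_pow, pow_add 2 m k, one_div, inv_pow]
      rw [show (2 : ℝ) ^ m * 2 ^ k * p ^ (m + k) = 2 ^ m * (2 ^ k * p ^ (m + k)) from by ring,
        inv_mul_cancel_left₀ (by positivity)]
      nlinarith [pow_nonneg hp0 (m + k), one_le_pow₀ (one_le_two (α := ℝ)) (n := k)]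
    calc b (m + k) = (N.choose (m + k) : ℝ) * p ^ (m + k) * (1 - p) ^ (N - (m + k)) := rfl
      _ ≤ (N.choose (m + k) : ℝ) * ((1 / 2 : ℝ) ^ m * (2 * p) ^ (m + k)) *
          (1 - p) ^ (N - (m + k)) := by
        have hc : (0 : ℝ) ≤ (N.choose (m + k) : ℝ) := Nat.cast_nonneg _
        have hq : (0 : ℝ) ≤ (1 - p) ^ (N - (m + k)) := pow_nonneg h1p _
        nlinarith [mul_le_mul_of_nonneg_left hkey2 hc]
      _ = g (m + k) := by rw [hg]; ring
  -- final real bound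
  have hNle : (N : ℝ) ≤ (n : ℝ) / 8 + 1 := by
    rw [hN]
    have := Nat.ceil_lt_add_one (show (0 : ℝ) ≤ (n : ℝ) / 8 by positivity)
    linarith
  have hm1 : (n : ℝ) * t / 8 - 1 ≤ (m : ℝ) := by
    have := Nat.lt_floor_add_one ((n : ℝ) * t / 8)
    rw [hm]; push_cast; linarith
  have hlog2 : 0 < Real.log 2 := Real.log_pos one_lt_two
  have e1 : (1 + p) ^ N ≤ Real.exp ((N : ℝ) * p) := by
    calc (1 + p) ^ N ≤ Real.exp p ^ N := by
          apply pow_le_pow_left₀ (by linarith)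
          have := Real.add_one_le_exp p; linarith
      _ = Real.exp ((N : ℝ) * p) := (Real.exp_nat_mul p N).symm
  have e2 : ((1 : ℝ) / 2) ^ m = Real.exp (-((m : ℝ) * Real.log 2)) := by
    rw [Real.exp_neg, Real.exp_nat_mul, Real.exp_log two_pos, one_div, inv_pow]
  have e3 : (1 / 2 : ℝ) ^ m * (1 + p) ^ N ≤ Real.exp (-((m : ℝ) * Real.log 2) + (N : ℝ) * p) := by
    rw [Real.exp_add, e2]
    exact mul_le_mul_of_nonneg_left e1 (Real.exp_pos _).le
  have hfinal : (1 / 2 : ℝ) ^ m * (1 + p) ^ N ≤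
      2 * Real.exp (1 / 2) * Real.exp (-(2 * Real.log 2 - 1) * n * t / 16) := by
    have hrhs : 2 * Real.exp (1 / 2) * Real.exp (-(2 * Real.log 2 - 1) * n * t / 16)
        = Real.exp (Real.log 2 + 1 / 2 + -(2 * Real.log 2 - 1) * n * t / 16) := by
      rw [Real.exp_add, Real.exp_add, Real.exp_log two_pos]
    rw [hrhs]
    refine le_trans e3 (Real.exp_le_exp.mpr ?_)
    have hA : (N : ℝ) * p ≤ ((n : ℝ) / 8 + 1) * (t / 2) := by
      have hN0 : (0 : ℝ) ≤ (N : ℝ) := Nat.cast_nonneg _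
      nlinarith
    have hB : ((n : ℝ) * t / 8 - 1) * Real.log 2 ≤ (m : ℝ) * Real.log 2 :=
      mul_le_mul_of_nonneg_right hm1 hlog2.le
    nlinarith [hA, hB]
  -- measure part
  have hsub : {ω | m ≤ Y ω} ⊆ ⋃ k : ℕ, {ω | Y ω = m + k} := by
    intro ω hω
    have hωm : m ≤ Y ω := hω
    exact Set.mem_iUnion.mpr ⟨Y ω - m, by simp only [Set.mem_setOf_eq]; omega⟩
  calc μ {ω | m ≤ Y ω} ≤ μ (⋃ k : ℕ, {ω | Y ω = m + k}) := measure_mono hsub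
    _ ≤ ∑' k : ℕ, μ {ω | Y ω = m + k} := measure_iUnion_le _
    _ = ∑' k : ℕ, ENNReal.ofReal (b (m + k)) := by
      apply tsum_congr; intro k; rw [hbin (m + k)]
    _ = ENNReal.ofReal (∑' k, b (m + k)) :=
      (ENNReal.ofReal_tsum_of_nonneg (fun k => hb0 _) hbsum).symm
    _ ≤ ENNReal.ofReal (2 * Real.exp (1 / 2) *
        Real.exp (-(2 * Real.log 2 - 1) * n * t / 16)) :=
      ENNReal.ofReal_le_ofReal (le_trans hkey hfinal)
end

section
/- Fix $n$ and $m$ with $2\le m\le n$, set $N = n-m+1$ and $M = \lfloor (m-1)^{3/4}\rfloor$. Let $Z$ be a simple symmetric random walk. Then $\sum_{z=M+1}^{m-1} \P_0(Z_{m-1}=z)\,\P_z(\min_{i\le N} Z_i>0) \le C\,\big(\tfrac{m}{\sqrt{N}}\wedge 1\big)\exp(-(m-1)^{1/2}/2)$ for a universal constant $C$, and this quantity is at most $C' (n-m+1)/n^{3/2}$ for a universal constant $C'$. -/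
open Finset
open scoped Classical

/-- The ±1 step determined by a Bool. -/
def step (b : Bool) : ℤ := if b then 1 else -1

/-- Partial sum of the first `i` of `n` ±1 increments. -/
def pSum (n : ℕ) (ω : Fin n → Bool) (i : ℕ) : ℤ :=
  ∑ k ∈ Finset.univ.filter (fun k : Fin n => (k : ℕ) < i), step (ω k)

/-- `P_0(Z_{m-1} = z)` for a walk of `m-1` steps. -/
noncomputable def endAtProb (m z : ℕ) : ℝ :=
  ((Finset.univ.filter
      (fun ω : Fin (m - 1) → Bool => pSum (m - 1) ω (m - 1) = (z : ℤ))).card : ℝ) / 2 ^ (m - 1)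

/-- `P_z(min_{i ≤ N} Z_i > 0)` for a walk of `N` steps started at `z`. -/
noncomputable def stayPosProb (N z : ℕ) : ℝ :=
  ((Finset.univ.filter
      (fun ω : Fin N → Bool => ∀ i, 1 ≤ i → i ≤ N → 0 < (z : ℤ) + pSum N ω i)).card : ℝ) / 2 ^ N

/-!
For `1 ≤ z ≤ m - 1`, the reflection principle bounds the number of `N`-step paths staying
above `-z` by the number of paths ending in `(-z, z]`, hence by `2z` times the central binomial
coefficient `C(N, N/2) ≤ 2^N / √N`; so `P_z(min Z > 0) ≤ 2m/√N`. What remains is the tail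
`P_0(Z_{m-1} > (m-1)^{3/4})`, which the Chernoff bound makes at most
`exp(-(m-1)^{3/2} / (2(m-1))) = exp(-√(m-1)/2)`. The second bound then follows from
`exp(-√x/2) ≤ 2^6 6! / x^3` and `n ≤ m (n - m + 1)`.
-/

lemma step_not (b : Bool) : step (!b) = -step b := by cases b <;> rfl

lemma step_eq_two_mul_sub_one (b : Bool) : step b = 2 * (if b then 1 else 0) - 1 := by
  cases b <;> rfl

lemma neg_one_le_step (b : Bool) : -1 ≤ step b := by cases b <;> decide

lemma pSum_zero (n : ℕ) (ω : Fin n → Bool) : pSum n ω 0 = 0 := by simp [pSum]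

lemma pSum_succ {n i : ℕ} (ω : Fin n → Bool) (h : i < n) :
    pSum n ω (i + 1) = pSum n ω i + step (ω ⟨i, h⟩) := by
  have : (univ.filter fun k : Fin n => (k : ℕ) < i + 1) =
      insert ⟨i, h⟩ (univ.filter fun k : Fin n => (k : ℕ) < i) := by
    ext k; simp [Fin.ext_iff]; omega
  rw [pSum, pSum, this, sum_insert (by simp), add_comm]

lemma pSum_congr {n i : ℕ} {ω ω' : Fin n → Bool}
    (h : ∀ k : Fin n, (k : ℕ) < i → ω k = ω' k) :
    pSum n ω i = pSum n ω' i :=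
  sum_congr rfl fun k hk => by rw [h k (by simpa using hk)]

lemma pSum_not (n : ℕ) (ω : Fin n → Bool) (i : ℕ) :
    pSum n (fun k => !ω k) i = -pSum n ω i := by
  simp only [pSum, step_not, sum_neg_distrib]

lemma pSum_self (n : ℕ) (ω : Fin n → Bool) : pSum n ω n = ∑ k, step (ω k) := by
  simp [pSum]

lemma pSum_self_eq_two_mul_card_sub (n : ℕ) (ω : Fin n → Bool) :
    pSum n ω n = 2 * #{k | ω k} - n := by
  rw [pSum_self]
  simp only [step_eq_two_mul_sub_one, sum_sub_distrib, ← mul_sum, sum_boole]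
  simp

def flipFrom (n τ : ℕ) (ω : Fin n → Bool) : Fin n → Bool :=
  fun k => if (k : ℕ) < τ then ω k else !ω k

lemma flipFrom_flipFrom (n τ : ℕ) (ω : Fin n → Bool) :
    flipFrom n τ (flipFrom n τ ω) = ω := by
  funext k; by_cases h : (k : ℕ) < τ <;> simp [flipFrom, h]

lemma pSum_flipFrom_of_le {n τ i : ℕ} (ω : Fin n → Bool) (h : i ≤ τ) :
    pSum n (flipFrom n τ ω) i = pSum n ω i :=
  pSum_congr fun k hk => by simp [flipFrom, hk.trans_le h]

lemma pSum_flipFrom_of_ge {n τ i : ℕ} (ω : Fin n → Bool) (h : τ ≤ i) :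
    pSum n (flipFrom n τ ω) i = 2 * pSum n ω τ - pSum n ω i := by
  set A := univ.filter fun k : Fin n => (k : ℕ) < i ∧ (k : ℕ) < τ
  set B := univ.filter fun k : Fin n => (k : ℕ) < i ∧ ¬(k : ℕ) < τ
  have hsplit : ∀ ω' : Fin n → Bool,
      pSum n ω' i = ∑ k ∈ A, step (ω' k) + ∑ k ∈ B, step (ω' k) :=
    fun ω' => by rw [pSum, ← sum_filter_add_sum_filter_not _ (fun k : Fin n => (k : ℕ) < τ),
      filter_filter, filter_filter]
  have hτ : pSum n ω τ = ∑ k ∈ A, step (ω k) :=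
    sum_congr (by ext k; simp [A]; omega) fun _ _ => rfl
  have hA : ∑ k ∈ A, step (flipFrom n τ ω k) = ∑ k ∈ A, step (ω k) :=
    sum_congr rfl fun k hk => by simp only [flipFrom, if_pos (mem_filter.1 hk).2.2]
  have hB : ∑ k ∈ B, step (flipFrom n τ ω k) = -∑ k ∈ B, step (ω k) := by
    rw [← sum_neg_distrib]
    exact sum_congr rfl fun k hk => by simp only [flipFrom, if_neg (mem_filter.1 hk).2.2, step_not]
  rw [hsplit, hsplit ω, hτ, hA, hB]
  ring

noncomputable def hitTime (n : ℕ) (z : ℤ) (ω : Fin n → Bool) : ℕ :=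
  sInf {i | i ≤ n ∧ pSum n ω i ≤ z}

section HitTime

variable {n : ℕ} {z : ℤ} {ω : Fin n → Bool}

lemma hitTime_le_of_pSum_le {i : ℕ} (hi : i ≤ n) (h : pSum n ω i ≤ z) :
    hitTime n z ω ≤ i :=
  Nat.sInf_le ⟨hi, h⟩

lemma hitTime_spec (h : ∃ i ≤ n, pSum n ω i ≤ z) :
    hitTime n z ω ≤ n ∧ pSum n ω (hitTime n z ω) ≤ z :=
  Nat.sInf_mem h

lemma lt_pSum_of_lt_hitTime {i : ℕ} (hin : i ≤ n) (hi : i < hitTime n z ω) : z < pSum n ω i :=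
  not_le.1 fun h => Nat.notMem_of_lt_sInf hi ⟨hin, h⟩

/-- Steps of size one cannot jump over the level. -/
lemma pSum_hitTime (hz : z < 0) (h : ∃ i ≤ n, pSum n ω i ≤ z) :
    pSum n ω (hitTime n z ω) = z := by
  obtain ⟨hτn, hτz⟩ := hitTime_spec h
  obtain ⟨j, hj⟩ : ∃ j, hitTime n z ω = j + 1 := by
    refine Nat.exists_eq_add_one.2 (Nat.pos_of_ne_zero fun h0 => ?_)
    rw [h0, pSum_zero] at hτz
    omega
  have hjn : j < n := by omega
  have hprev : z < pSum n ω j := lt_pSum_of_lt_hitTime hjn.le (by omega)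
  rw [hj, pSum_succ ω hjn] at hτz ⊢
  linarith [neg_one_le_step (ω ⟨j, hjn⟩)]

noncomputable def reflect (n : ℕ) (z : ℤ) (ω : Fin n → Bool) : Fin n → Bool :=
  flipFrom n (hitTime n z ω) ω

lemma pSum_reflect_of_le {i : ℕ} (h : i ≤ hitTime n z ω) :
    pSum n (reflect n z ω) i = pSum n ω i :=
  pSum_flipFrom_of_le ω h

lemma pSum_reflect_of_ge {i : ℕ} (h : hitTime n z ω ≤ i) :
    pSum n (reflect n z ω) i = 2 * pSum n ω (hitTime n z ω) - pSum n ω i :=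
  pSum_flipFrom_of_ge ω h

lemma hitTime_reflect (h : ∃ i ≤ n, pSum n ω i ≤ z) :
    hitTime n z (reflect n z ω) = hitTime n z ω := by
  obtain ⟨hτn, hτz⟩ := hitTime_spec h
  have hrefl : pSum n (reflect n z ω) (hitTime n z ω) ≤ z := by
    rwa [pSum_reflect_of_le le_rfl]
  refine le_antisymm (hitTime_le_of_pSum_le hτn hrefl) (not_lt.1 fun hlt => ?_)
  obtain ⟨hτn', hτz'⟩ := hitTime_spec ⟨_, hτn, hrefl⟩
  rw [pSum_reflect_of_le hlt.le] at hτz'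
  exact (lt_pSum_of_lt_hitTime hτn' hlt).not_ge hτz'

lemma reflect_reflect (h : ∃ i ≤ n, pSum n ω i ≤ z) : reflect n z (reflect n z ω) = ω := by
  rw [reflect, hitTime_reflect h, reflect, flipFrom_flipFrom]

end HitTime

/-- The reflection principle, in the form of an injection. -/
lemma card_end_lt_le_card_hit {n : ℕ} {z : ℤ} (hz : z < 0) :
    #{ω : Fin n → Bool | pSum n ω n < z} ≤
      #{ω : Fin n → Bool | z < pSum n ω n ∧ ∃ i ≤ n, pSum n ω i ≤ z} := by
  have hhit : ∀ ω : Fin n → Bool, pSum n ω n < z → ∃ i ≤ n, pSum n ω i ≤ z :=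
    fun ω h => ⟨n, le_rfl, h.le⟩
  refine card_le_card_of_injOn (reflect n z) (fun ω hω => ?_) (fun ω₁ h₁ ω₂ h₂ he => ?_)
  · simp only [coe_filter, mem_univ, true_and, Set.mem_ofPred_eq] at hω ⊢
    obtain ⟨hτn, -⟩ := hitTime_spec (hhit ω hω)
    have hτz := pSum_hitTime hz (hhit ω hω)
    refine ⟨?_, _, hτn, ?_⟩
    · rw [pSum_reflect_of_ge hτn, hτz]
      omega
    · rw [pSum_reflect_of_le le_rfl, hτz]
  · simp only [coe_filter, mem_univ, true_and, Set.mem_ofPred_eq] at h₁ h₂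
    rw [← reflect_reflect (hhit ω₁ h₁), he, reflect_reflect (hhit ω₂ h₂)]

lemma card_end_lt_neg_eq (n : ℕ) (z : ℤ) :
    #{ω : Fin n → Bool | pSum n ω n < -z} = #{ω : Fin n → Bool | z < pSum n ω n} := by
  refine card_nbij' (fun ω k => !ω k) (fun ω k => !ω k) (fun ω hω => ?_) (fun ω hω => ?_)
    (fun ω _ => by simp) (fun ω _ => by simp)
  all_goals
    simp only [coe_filter, mem_univ, true_and, Set.mem_ofPred_eq, pSum_not] at hω ⊢
    omega

lemma card_filter_card_eq_choose (n j : ℕ) :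
    #{ω : Fin n → Bool | #{k | ω k} = j} = n.choose j := by
  rw [show n.choose j = #(powersetCard j (univ : Finset (Fin n))) by simp]
  refine card_nbij' (fun ω => univ.filter fun k => ω k) (fun s k => decide (k ∈ s))
    (fun ω hω => ?_) (fun s hs => ?_) (fun ω _ => by simp) (fun s _ => by ext; simp)
  · simpa using hω
  · simpa using hs

lemma card_end_eq_le_choose_half (n : ℕ) (y : ℤ) :
    #{ω : Fin n → Bool | pSum n ω n = y} ≤ n.choose (n / 2) := by
  calc #{ω : Fin n → Bool | pSum n ω n = y}
      ≤ #{ω : Fin n → Bool | #{k | ω k} = ((y + n) / 2).toNat} := by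
        refine card_le_card fun ω hω => ?_
        simp only [mem_filter, mem_univ, true_and, pSum_self_eq_two_mul_card_sub] at hω ⊢
        omega
    _ = n.choose ((y + n) / 2).toNat := card_filter_card_eq_choose _ _
    _ ≤ n.choose (n / 2) := Nat.choose_le_middle _ n

lemma card_end_mem_Ioc_le (n : ℕ) (a b : ℤ) :
    #{ω : Fin n → Bool | pSum n ω n ∈ Ioc a b} ≤ (b - a).toNat * n.choose (n / 2) := by
  rw [mul_comm, ← Int.card_Ioc]
  refine card_le_mul_card_image_of_maps_to (f := fun ω => pSum n ω n)
    (fun ω hω => (mem_filter.1 hω).2) _ fun y _ => ?_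
  rw [filter_filter]
  exact (card_le_card fun ω hω => mem_filter.2 ⟨mem_univ _, (mem_filter.1 hω).2.2⟩).trans
    (card_end_eq_le_choose_half n y)

lemma neg_lt_pSum_of_stay {N z : ℕ} {ω : Fin N → Bool}
    (h : ∀ i, 1 ≤ i → i ≤ N → 0 < (z : ℤ) + pSum N ω i) (hz : 0 < z) {i : ℕ} (hi : i ≤ N) :
    -(z : ℤ) < pSum N ω i := by
  rcases Nat.eq_zero_or_pos i with rfl | hi0
  · rw [pSum_zero]; omega
  · linarith [h i hi0 hi]

/-- Ballot-type bound: by the reflection principle, the paths staying above `-z` are at most as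
many as the paths ending in `(-z, z]`. -/
lemma card_stay_above_le (N z : ℕ) (hz : 0 < z) :
    #{ω : Fin N → Bool | ∀ i, 1 ≤ i → i ≤ N → 0 < (z : ℤ) + pSum N ω i} ≤
      2 * z * N.choose (N / 2) := by
  set S : Finset (Fin N → Bool) :=
    {ω | ∀ i, 1 ≤ i → i ≤ N → 0 < (z : ℤ) + pSum N ω i}
  set G : Finset (Fin N → Bool) :=
    {ω | -(z : ℤ) < pSum N ω N ∧ ∃ i ≤ N, pSum N ω i ≤ -z}
  set I : Finset (Fin N → Bool) := {ω | pSum N ω N ∈ Ioc (-(z : ℤ)) z}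
  set A : Finset (Fin N → Bool) := {ω | (z : ℤ) < pSum N ω N}
  have hdisj : Disjoint S G := disjoint_left.2 fun ω hS hG => by
    simp only [S, G, mem_filter, mem_univ, true_and] at hS hG
    obtain ⟨i, hi, hle⟩ := hG.2
    exact (neg_lt_pSum_of_stay hS hz hi).not_ge hle
  have hsub : S ∪ G ⊆ I ∪ A := by
    intro ω hω
    have hend : -(z : ℤ) < pSum N ω N := by
      simp only [S, G, mem_union, mem_filter, mem_univ, true_and] at hω
      rcases hω with hS | hG
      · exact neg_lt_pSum_of_stay hS hz le_rfl
      · exact hG.1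
    by_cases hzω : pSum N ω N ≤ z
    · exact mem_union_left _ (by simp [I, hend, hzω])
    · exact mem_union_right _ (by simp [A, not_le.1 hzω])
  have hAG : #A ≤ #G := by
    rw [← card_end_lt_neg_eq]
    exact card_end_lt_le_card_hit (by omega)
  have hI : #I ≤ 2 * z * N.choose (N / 2) := by
    convert card_end_mem_Ioc_le N (-z) z using 2
    omega
  have := (card_union_of_disjoint hdisj).symm.trans_le
    ((card_le_card hsub).trans (card_union_le I A))
  omega

lemma centralBinom_sq_mul_le (k : ℕ) : k.centralBinom ^ 2 * (2 * k + 1) ≤ 16 ^ k := by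
  induction k with
  | zero => simp
  | succ k ih =>
    have hrec : (k + 1) ^ 2 * ((k + 1).centralBinom ^ 2 * (2 * k + 3)) =
        (4 * (2 * k + 1) * (2 * k + 3)) * (k.centralBinom ^ 2 * (2 * k + 1)) := by
      rw [← mul_assoc, ← mul_pow, Nat.succ_mul_centralBinom_succ]; ring
    refine Nat.le_of_mul_le_mul_left ?_ (by positivity : 0 < (k + 1) ^ 2)
    calc (k + 1) ^ 2 * ((k + 1).centralBinom ^ 2 * (2 * (k + 1) + 1))
        = (4 * (2 * k + 1) * (2 * k + 3)) * (k.centralBinom ^ 2 * (2 * k + 1)) := hrec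
      _ ≤ (16 * (k + 1) ^ 2) * 16 ^ k := Nat.mul_le_mul (by nlinarith) ih
      _ = (k + 1) ^ 2 * 16 ^ (k + 1) := by ring

lemma choose_half_sq_mul_le (n : ℕ) : n.choose (n / 2) ^ 2 * n ≤ 4 ^ n := by
  obtain ⟨k, rfl | rfl⟩ := Nat.even_or_odd' n
  · have h := centralBinom_sq_mul_le k
    rw [Nat.centralBinom_eq_two_mul_choose] at h
    rw [show 2 * k / 2 = k by omega, pow_mul, show 4 ^ 2 = 16 by rfl]
    exact le_trans (Nat.mul_le_mul_left _ (by omega)) h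
  · have hmid : 2 * (2 * k + 1).choose k = (k + 1).centralBinom := by
      rw [Nat.centralBinom_eq_two_mul_choose, show 2 * (k + 1) = 2 * k + 1 + 1 by ring,
        Nat.choose_succ_succ, Nat.choose_symm_half]; ring
    have h := centralBinom_sq_mul_le (k + 1)
    rw [← hmid] at h
    rw [show (2 * k + 1) / 2 = k by omega, show 4 ^ (2 * k + 1) = 4 * 16 ^ k by
      rw [pow_succ, pow_mul]; ring]
    rw [pow_succ 16 k] at h
    nlinarith

lemma choose_half_le_two_pow_div_sqrt {n : ℕ} (hn : 0 < n) :
    (n.choose (n / 2) : ℝ) ≤ 2 ^ n / Real.sqrt n := by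
  have hsq : ((n.choose (n / 2) : ℝ) * Real.sqrt n) ^ 2 ≤ (2 ^ n) ^ 2 := by
    rw [mul_pow, Real.sq_sqrt n.cast_nonneg, ← pow_mul, mul_comm n, pow_mul]
    exact_mod_cast (choose_half_sq_mul_le n).trans (by norm_num)
  rw [le_div_iff₀ (by positivity)]
  exact (pow_le_pow_iff_left₀ (by positivity) (by positivity) two_ne_zero).1 hsq

lemma stayPosProb_le_one (N z : ℕ) : stayPosProb N z ≤ 1 := by
  rw [stayPosProb, div_le_one (by positivity)]
  exact_mod_cast (card_filter_le _ _).trans_eq (by simp)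

lemma stayPosProb_le (N z : ℕ) (hN : 0 < N) (hz : 0 < z) :
    stayPosProb N z ≤ 2 * z / Real.sqrt N := by
  have hcard :
      (#{ω : Fin N → Bool | ∀ i, 1 ≤ i → i ≤ N → 0 < (z : ℤ) + pSum N ω i} : ℝ) ≤
      2 * z * N.choose (N / 2) := by exact_mod_cast card_stay_above_le N z hz
  calc stayPosProb N z ≤ 2 * z * N.choose (N / 2) / 2 ^ N := by
        rw [stayPosProb]; gcongr
    _ ≤ 2 * z * (2 ^ N / Real.sqrt N) / 2 ^ N := by
        gcongr; exact choose_half_le_two_pow_div_sqrt hN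
    _ = 2 * z / Real.sqrt N := by field_simp

lemma sum_exp_mul_pSum (n : ℕ) (t : ℝ) :
    ∑ ω : Fin n → Bool, Real.exp (t * pSum n ω n) = (2 * Real.cosh t) ^ n := by
  have hstep : ∑ b : Bool, Real.exp (t * step b) = 2 * Real.cosh t := by
    simp [step, Real.cosh_eq]; ring
  rw [← hstep, Fintype.sum_pow]
  refine sum_congr rfl fun ω _ => ?_
  rw [pSum_self, ← Real.exp_sum]
  push_cast
  rw [mul_sum]

/-- Chernoff bound, with the exponential moment `cosh t ^ n ≤ exp (n t² / 2)` at `t = a / n`. -/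
lemma card_le_pSum_le (n : ℕ) (hn : 0 < n) {a : ℝ} (ha : 0 ≤ a) :
    (#{ω : Fin n → Bool | a ≤ pSum n ω n} : ℝ) ≤ 2 ^ n * Real.exp (-a ^ 2 / (2 * n)) := by
  set t := a / n
  have ht : 0 ≤ t := by positivity
  have hmarkov : (#{ω : Fin n → Bool | a ≤ pSum n ω n} : ℝ) * Real.exp (t * a) ≤
      ∑ ω : Fin n → Bool, Real.exp (t * pSum n ω n) := by
    rw [← nsmul_eq_mul]
    refine (card_nsmul_le_sum _ _ _ fun ω hω => ?_).trans
      (sum_le_univ_sum_of_nonneg fun _ => (Real.exp_pos _).le)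
    exact Real.exp_le_exp.2 (mul_le_mul_of_nonneg_left (mem_filter.1 hω).2 ht)
  have hmgf : (2 * Real.cosh t) ^ n ≤ 2 ^ n * Real.exp (t * a) * Real.exp (-a ^ 2 / (2 * n)) := by
    have hexp : Real.exp (t ^ 2 / 2) ^ n = Real.exp (t * a + -a ^ 2 / (2 * n)) := by
      rw [← Real.exp_nat_mul]
      congr 1
      simp only [t]
      field_simp
      ring
    calc (2 * Real.cosh t) ^ n = 2 ^ n * Real.cosh t ^ n := mul_pow _ _ _
      _ ≤ 2 ^ n * Real.exp (t ^ 2 / 2) ^ n := by gcongr; exact Real.cosh_le_exp_half_sq t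
      _ = 2 ^ n * Real.exp (t * a) * Real.exp (-a ^ 2 / (2 * n)) := by
        rw [hexp, Real.exp_add, mul_assoc]
  rw [sum_exp_mul_pSum] at hmarkov
  exact le_of_mul_le_mul_right (hmarkov.trans (by linarith)) (Real.exp_pos _)

lemma sum_card_end_eq_le_card_end_ge (n : ℕ) {a : ℝ} (s : Finset ℕ)
    (hs : ∀ z ∈ s, a ≤ z) :
    ∑ z ∈ s, #{ω : Fin n → Bool | pSum n ω n = (z : ℤ)} ≤
      #{ω : Fin n → Bool | a ≤ pSum n ω n} := by
  rw [← card_biUnion fun z₁ _ z₂ _ hne => disjoint_filter.2 fun ω _ h₁ h₂ =>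
    hne (Nat.cast_injective (h₁.symm.trans h₂))]
  refine card_le_card fun ω hω => ?_
  obtain ⟨z, hz, hωz⟩ := mem_biUnion.1 hω
  rw [mem_filter] at hωz ⊢
  exact ⟨mem_univ _, by rw [hωz.2]; exact_mod_cast hs z hz⟩

lemma sum_endAtProb_le_exp {m : ℕ} (hm : 2 ≤ m) {a : ℝ} (ha : 0 ≤ a) (s : Finset ℕ)
    (hs : ∀ z ∈ s, a ≤ z) :
    ∑ z ∈ s, endAtProb m z ≤ Real.exp (-a ^ 2 / (2 * ((m : ℝ) - 1))) := by
  have hcast : ((m - 1 : ℕ) : ℝ) = m - 1 := by rw [Nat.cast_sub (by omega)]; simp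
  have hcard :
      (∑ z ∈ s, #{ω : Fin (m - 1) → Bool | pSum (m - 1) ω (m - 1) = (z : ℤ)} : ℝ) ≤
      2 ^ (m - 1) * Real.exp (-a ^ 2 / (2 * ((m : ℝ) - 1))) := by
    rw [← hcast]
    exact_mod_cast (Nat.cast_le (α := ℝ).2 (sum_card_end_eq_le_card_end_ge _ s hs)).trans
      (card_le_pSum_le (m - 1) (by omega) ha)
  simp only [endAtProb, ← sum_div]
  rw [div_le_iff₀ (by positivity), mul_comm]
  exact_mod_cast hcard

lemma sum_endAtProb_tail_le {m : ℕ} (hm : 2 ≤ m) :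
    ∑ z ∈ Icc (⌊((m : ℝ) - 1) ^ ((3 : ℝ) / 4)⌋₊ + 1) (m - 1), endAtProb m z ≤
      Real.exp (-Real.sqrt ((m : ℝ) - 1) / 2) := by
  have hx : (0 : ℝ) < m - 1 := by
    have : (2 : ℝ) ≤ m := by exact_mod_cast hm
    linarith
  have hexponent : (((m : ℝ) - 1) ^ ((3 : ℝ) / 4)) ^ 2 / (2 * ((m : ℝ) - 1)) =
      Real.sqrt ((m : ℝ) - 1) / 2 := by
    rw [← Real.rpow_natCast, ← Real.rpow_mul hx.le, Real.sqrt_eq_rpow,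
      show (3 : ℝ) / 4 * (2 : ℕ) = 1 + 1 / 2 by norm_num, Real.rpow_add hx, Real.rpow_one]
    field_simp
  have hs : ∀ z ∈ Icc (⌊((m : ℝ) - 1) ^ ((3 : ℝ) / 4)⌋₊ + 1) (m - 1),
      ((m : ℝ) - 1) ^ ((3 : ℝ) / 4) ≤ z := fun z hz =>
    (Nat.lt_floor_add_one _).le.trans (by exact_mod_cast (mem_Icc.1 hz).1)
  have := sum_endAtProb_le_exp hm (by positivity) _ hs
  rwa [neg_div, hexponent, ← neg_div] at this

lemma tail_sum_le {n m : ℕ} (hm : 2 ≤ m) (hmn : m ≤ n) :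
    ∑ z ∈ Icc (⌊((m : ℝ) - 1) ^ ((3 : ℝ) / 4)⌋₊ + 1) (m - 1),
        endAtProb m z * stayPosProb (n - m + 1) z ≤
      2 * min ((m : ℝ) / Real.sqrt ((n : ℝ) - m + 1)) 1 *
        Real.exp (-Real.sqrt ((m : ℝ) - 1) / 2) := by
  set T := Icc (⌊((m : ℝ) - 1) ^ ((3 : ℝ) / 4)⌋₊ + 1) (m - 1)
  set B := min ((m : ℝ) / Real.sqrt ((n : ℝ) - m + 1)) 1
  have hN : ((n - m + 1 : ℕ) : ℝ) = n - m + 1 := by rw [Nat.cast_add, Nat.cast_sub hmn]; simp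
  have hstay : ∀ z ∈ T, stayPosProb (n - m + 1) z ≤ 2 * B := by
    intro z hz
    obtain ⟨hz1, hzm⟩ := mem_Icc.1 hz
    have hzm' : (z : ℝ) ≤ m := by exact_mod_cast (by omega : z ≤ m)
    rw [mul_min_of_nonneg _ _ zero_le_two]
    refine le_min ?_ ((stayPosProb_le_one _ _).trans (by norm_num))
    calc stayPosProb (n - m + 1) z ≤ 2 * z / Real.sqrt ((n - m + 1 : ℕ) : ℝ) :=
          stayPosProb_le _ _ (by omega) (by omega)
      _ ≤ 2 * ((m : ℝ) / Real.sqrt ((n : ℝ) - m + 1)) := by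
          rw [hN, mul_div_assoc]; gcongr
  calc ∑ z ∈ T, endAtProb m z * stayPosProb (n - m + 1) z
      ≤ ∑ z ∈ T, endAtProb m z * (2 * B) := sum_le_sum fun z hz =>
        mul_le_mul_of_nonneg_left (hstay z hz) (by unfold endAtProb; positivity)
    _ = (∑ z ∈ T, endAtProb m z) * (2 * B) := (sum_mul _ _ _).symm
    _ ≤ Real.exp (-Real.sqrt ((m : ℝ) - 1) / 2) * (2 * B) := by
        gcongr; exact sum_endAtProb_tail_le hm
    _ = 2 * B * Real.exp (-Real.sqrt ((m : ℝ) - 1) / 2) := mul_comm _ _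

lemma exp_neg_sqrt_div_two_le {x : ℝ} (hx : 0 < x) :
    Real.exp (-Real.sqrt x / 2) ≤ 2 ^ 6 * Nat.factorial 6 / x ^ 3 := by
  have h := Real.pow_div_factorial_le_exp (Real.sqrt x / 2) (by positivity) 6
  have hpow : (Real.sqrt x / 2) ^ 6 = x ^ 3 / 2 ^ 6 := by
    rw [div_pow, show 6 = 2 * 3 by rfl, pow_mul, Real.sq_sqrt hx.le]
  rw [hpow] at h
  rw [neg_div, Real.exp_neg, inv_le_iff_one_le_mul₀ (Real.exp_pos _)]
  calc (1 : ℝ) = 2 ^ 6 * Nat.factorial 6 / x ^ 3 * (x ^ 3 / 2 ^ 6 / Nat.factorial 6) := by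
        field_simp
    _ ≤ 2 ^ 6 * Nat.factorial 6 / x ^ 3 * Real.exp (Real.sqrt x / 2) := by gcongr

lemma rpow_three_halves_le {m n : ℝ} (hm : 1 ≤ m) (hmn : m ≤ n) :
    n ^ ((3 : ℝ) / 2) ≤ m ^ 2 * ((n - m + 1) * Real.sqrt (n - m + 1)) := by
  have hN : 1 ≤ n - m + 1 := by linarith
  have hnmN : n ≤ m * (n - m + 1) := by nlinarith
  calc n ^ ((3 : ℝ) / 2) ≤ (m * (n - m + 1)) ^ ((3 : ℝ) / 2) := by gcongr; linarith
    _ = m ^ ((3 : ℝ) / 2) * (n - m + 1) ^ ((3 : ℝ) / 2) := by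
        rw [Real.mul_rpow (by linarith) (by linarith)]
    _ ≤ m ^ (2 : ℝ) * (n - m + 1) ^ ((3 : ℝ) / 2) := by
        gcongr
        norm_num
    _ = m ^ 2 * ((n - m + 1) * Real.sqrt (n - m + 1)) := by
        rw [Real.rpow_two, show (3 : ℝ) / 2 = 1 + 1 / 2 by norm_num,
          Real.rpow_add (by linarith), Real.rpow_one, Real.sqrt_eq_rpow]

lemma min_mul_exp_le {m n : ℝ} (hm : 2 ≤ m) (hmn : m ≤ n) :
    2 * min (m / Real.sqrt (n - m + 1)) 1 * Real.exp (-Real.sqrt (m - 1) / 2) ≤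
      2 ^ 10 * Nat.factorial 6 * (n - m + 1) / n ^ ((3 : ℝ) / 2) := by
  have hx : 0 < m - 1 := by linarith
  have hN : 0 < Real.sqrt (n - m + 1) := Real.sqrt_pos.2 (by linarith)
  have hm3 : m ^ 3 ≤ (2 * (m - 1)) ^ 3 := pow_le_pow_left₀ (by linarith) (by linarith) 3
  have hn := rpow_three_halves_le (by linarith) hmn
  calc 2 * min (m / Real.sqrt (n - m + 1)) 1 * Real.exp (-Real.sqrt (m - 1) / 2)
      ≤ 2 * (m / Real.sqrt (n - m + 1)) * (2 ^ 6 * Nat.factorial 6 / (m - 1) ^ 3) := by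
        gcongr
        exacts [min_le_left _ _, exp_neg_sqrt_div_two_le hx]
    _ = 2 ^ 7 * Nat.factorial 6 * m / (Real.sqrt (n - m + 1) * (m - 1) ^ 3) := by
        field_simp
    _ ≤ 2 ^ 10 * Nat.factorial 6 * (n - m + 1) / n ^ ((3 : ℝ) / 2) := by
        rw [div_le_div_iff₀ (by positivity) (Real.rpow_pos_of_pos (by linarith) _)]
        calc 2 ^ 7 * Nat.factorial 6 * m * n ^ ((3 : ℝ) / 2)
            ≤ 2 ^ 7 * Nat.factorial 6 * m * (m ^ 2 * ((n - m + 1) * Real.sqrt (n - m + 1))) := by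
              gcongr
          _ = 2 ^ 7 * Nat.factorial 6 * m ^ 3 * ((n - m + 1) * Real.sqrt (n - m + 1)) := by ring
          _ ≤ 2 ^ 7 * Nat.factorial 6 * (2 * (m - 1)) ^ 3 *
                ((n - m + 1) * Real.sqrt (n - m + 1)) := by
              gcongr
          _ = 2 ^ 10 * Nat.factorial 6 * (n - m + 1) * (Real.sqrt (n - m + 1) * (m - 1) ^ 3) := by
              ring

/-- With `N = n-m+1` and `M = ⌊(m-1)^{3/4}⌋`, the tail sum
`∑_{z=M+1}^{m-1} P_0(Z_{m-1}=z) P_z(min_{i≤N} Z_i > 0)` is at most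
`C (m/√N ∧ 1) exp(-(m-1)^{1/2}/2)`, and at most `C' (n-m+1)/n^{3/2}`,
for universal constants `C, C'`. -/
theorem influence_tail_sum_bound :
    ∃ C C' : ℝ, 0 < C ∧ 0 < C' ∧ ∀ n m : ℕ, 2 ≤ m → m ≤ n →
      (∑ z ∈ Finset.Icc (⌊((m : ℝ) - 1) ^ ((3 : ℝ) / 4)⌋₊ + 1) (m - 1),
          endAtProb m z * stayPosProb (n - m + 1) z) ≤
        C * min ((m : ℝ) / Real.sqrt ((n : ℝ) - m + 1)) 1 *
          Real.exp (-Real.sqrt ((m : ℝ) - 1) / 2) ∧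
      (∑ z ∈ Finset.Icc (⌊((m : ℝ) - 1) ^ ((3 : ℝ) / 4)⌋₊ + 1) (m - 1),
          endAtProb m z * stayPosProb (n - m + 1) z) ≤
        C' * ((n : ℝ) - m + 1) / (n : ℝ) ^ ((3 : ℝ) / 2) := by
  refine ⟨2, 2 ^ 10 * Nat.factorial 6, by norm_num, by positivity, fun n m hm hmn => ?_⟩
  have hsum := tail_sum_le hm hmn
  exact ⟨hsum, hsum.trans (min_mul_exp_le (by exact_mod_cast hm) (by exact_mod_cast hmn))⟩
end
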